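/- The complement in ℝ² of the lollipop L (the segment from (0,0) to (0,1) union the circle of radius 1 centered at (0,2)) has exactly two connected components: the open disk {x | dist x (0,2) < 1} and its unbounded complement. -/

import Mathlib

/-!
The open disk is convex and the circle separates it from the rest of the complement, so it is a
component. The rest is the exterior of the closed disk with a radial slit removed, the slit
starting on the circle. It is path-connected: every point can be pushed outwards along its ray to
a circle enclosing the slit without meeting the slit, and that circle is path-connected.
-/

open Metric Set

theorem connectedComponentIn_union_eq_left {X : Type*} [TopologicalSpace X] {A B : Set X}
    (hA : IsOpen A) (hB : IsOpen B) (hAB : Disjoint A B) (hA' : IsPreconnected A) {x : X}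
    (hx : x ∈ A) : connectedComponentIn (A ∪ B) x = A :=
  subset_antisymm
    (isPreconnected_connectedComponentIn.subset_left_of_subset_union hA hB hAB
      (connectedComponentIn_subset _ _) ⟨x, mem_connectedComponentIn (subset_union_left hx), hx⟩)
    (hA'.subset_connectedComponentIn hx subset_union_left)

section Lollipop

variable {X : Type*} [PseudoMetricSpace X] {K : Set X} {c : X} {r : ℝ}

theorem compl_union_sphere_sdiff_ball :
    (K ∪ sphere c r)ᶜ \ ball c r = (closedBall c r)ᶜ \ K := by
  ext x
  simp only [mem_sdiff, mem_compl_iff, mem_union, mem_sphere, mem_ball, mem_closedBall, not_or,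
    not_lt, not_le]
  constructor
  · rintro ⟨⟨hK, hs⟩, hb⟩
    exact ⟨lt_of_le_of_ne hb (Ne.symm hs), hK⟩
  · rintro ⟨hb, hK⟩
    exact ⟨⟨hK, hb.ne'⟩, hb.le⟩

theorem compl_union_sphere_eq (hK : Disjoint K (ball c r)) :
    (K ∪ sphere c r)ᶜ = ball c r ∪ ((closedBall c r)ᶜ \ K) := by
  have hball : ball c r ⊆ (K ∪ sphere c r)ᶜ := fun x hx ↦
    not_or.2 ⟨fun hxK ↦ hK.ne_of_mem hxK hx rfl, (mem_ball.1 hx).ne⟩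
  rw [← compl_union_sphere_sdiff_ball, union_sdiff_cancel hball]

theorem disjoint_ball_compl_closedBall_sdiff : Disjoint (ball c r) ((closedBall c r)ᶜ \ K) :=
  (disjoint_compl_right.mono_left ball_subset_closedBall).mono_right sdiff_subset

theorem connectedComponentIn_ball_union_compl_closedBall_sdiff_of_mem_right (hK : IsClosed K)
    (hU : IsPreconnected ((closedBall c r)ᶜ \ K)) {x : X} (hx : x ∈ (closedBall c r)ᶜ \ K) :
    connectedComponentIn (ball c r ∪ ((closedBall c r)ᶜ \ K)) x = (closedBall c r)ᶜ \ K := by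
  rw [union_comm]
  exact connectedComponentIn_union_eq_left (isClosed_closedBall.isOpen_compl.sdiff hK)
    isOpen_ball disjoint_ball_compl_closedBall_sdiff.symm hU hx

theorem connectedComponentIn_ball_union_compl_closedBall_sdiff_of_mem_left {E : Type*}
    [NormedAddCommGroup E] [NormedSpace ℝ E] {K : Set E} {c : E} {r : ℝ} (hK : IsClosed K)
    {x : E} (hx : x ∈ ball c r) :
    connectedComponentIn (ball c r ∪ ((closedBall c r)ᶜ \ K)) x = ball c r :=
  connectedComponentIn_union_eq_left isOpen_ball (isClosed_closedBall.isOpen_compl.sdiff hK)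
    disjoint_ball_compl_closedBall_sdiff (convex_ball c r).isPreconnected hx

end Lollipop

section RadialSlit

variable {E : Type*} [NormedAddCommGroup E] [NormedSpace ℝ E] {c v : E} {r b : ℝ}

theorem segment_add_smul_eq_image (c v : E) (hrb : r ≤ b) :
    segment ℝ (c + r • v) (c + b • v) = (fun t : ℝ ↦ c + t • v) '' Icc r b := by
  have hf : ⇑(AffineMap.lineMap c (c + v) : ℝ →ᵃ[ℝ] E) = fun t : ℝ ↦ c + t • v := by
    ext t; simp [AffineMap.lineMap_apply, add_comm]
  rw [← segment_eq_Icc hrb, ← hf, image_segment, hf]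

theorem dist_add_smul_left (hv : ‖v‖ = 1) {t : ℝ} (ht : 0 ≤ t) : dist (c + t • v) c = t := by
  rw [dist_eq_norm, add_sub_cancel_left, norm_smul, hv, mul_one, Real.norm_of_nonneg ht]

theorem disjoint_segment_add_smul_ball (hv : ‖v‖ = 1) (hr : 0 ≤ r) (hrb : r ≤ b) :
    Disjoint (segment ℝ (c + r • v) (c + b • v)) (ball c r) := by
  rw [segment_add_smul_eq_image c v hrb, disjoint_left]
  rintro _ ⟨t, ht, rfl⟩ hball
  rw [mem_ball, dist_add_smul_left hv (hr.trans ht.1)] at hball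
  exact hball.not_ge ht.1

theorem sphere_subset_compl_closedBall_sdiff_segment (hv : ‖v‖ = 1) (hr : 0 ≤ r) (hrb : r ≤ b)
    {R : ℝ} (hR : b < R) :
    sphere c R ⊆ (closedBall c r)ᶜ \ segment ℝ (c + r • v) (c + b • v) := by
  intro y hy
  rw [mem_sphere] at hy
  refine ⟨by rw [mem_compl_iff, mem_closedBall, hy, not_le]; linarith, ?_⟩
  rw [segment_add_smul_eq_image c v hrb]
  rintro ⟨t, ht, rfl⟩
  rw [dist_add_smul_left hv (hr.trans ht.1)] at hy
  linarith [ht.2]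

theorem dist_add_div_dist_smul_sub_left {x : E} (hx : x ≠ c) {ρ : ℝ} (hρ : 0 ≤ ρ) :
    dist (c + (ρ / dist x c) • (x - c)) c = ρ := by
  have hd : 0 < dist x c := dist_pos.2 hx
  rw [dist_eq_norm, add_sub_cancel_left, norm_smul, ← dist_eq_norm,
    Real.norm_of_nonneg (div_nonneg hρ hd.le), div_mul_cancel₀ _ hd.ne']

/-- The slit lies on one ray from `c` and starts on `sphere c r`, so moving a point of the
exterior along its ray, between its own radius and a radius beyond the slit, never meets it. -/
theorem add_div_dist_smul_sub_mem_compl_closedBall_sdiff_segment (hv : ‖v‖ = 1) (hr : 0 ≤ r)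
    (hrb : r ≤ b) {x : E} (hx : x ∈ (closedBall c r)ᶜ \ segment ℝ (c + r • v) (c + b • v))
    {R ρ : ℝ} (hR : b < R) (hρ : ρ ∈ uIcc (dist x c) R) :
    c + (ρ / dist x c) • (x - c) ∈ (closedBall c r)ᶜ \ segment ℝ (c + r • v) (c + b • v) := by
  obtain ⟨hxr, hxK⟩ := hx
  rw [mem_compl_iff, mem_closedBall, not_le] at hxr
  set d := dist x c
  have hd : 0 < d := hr.trans_lt hxr
  have hρr : r < ρ := lt_of_lt_of_le (lt_min hxr (by linarith)) hρ.1
  have hρ0 : 0 < ρ := hr.trans_lt hρr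
  have hdist := dist_add_div_dist_smul_sub_left (dist_pos.1 hd) hρ0.le
  refine ⟨by rw [mem_compl_iff, mem_closedBall, hdist, not_le]; exact hρr, ?_⟩
  rw [segment_add_smul_eq_image c v hrb] at hxK ⊢
  rintro ⟨t, ht, hft⟩
  simp only at hft
  obtain rfl : t = ρ := by rw [← dist_add_smul_left hv (hr.trans ht.1), hft, hdist]
  have hdt : d ≤ t := by
    rcases le_total d R with h | h
    · exact (uIcc_of_le h ▸ hρ).1
    · linarith [(uIcc_of_ge h ▸ hρ).1, ht.2]
  have hxv : x - c = d • v := by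
    have htv : (t / d) • (x - c) = t • v := (add_left_cancel hft).symm
    calc x - c = ((d / t) * (t / d)) • (x - c) := by
          rw [div_mul_div_cancel₀ hρ0.ne', div_self hd.ne', one_smul]
      _ = d • v := by rw [mul_smul, htv, smul_smul, div_mul_cancel₀ _ hρ0.ne']
  exact hxK ⟨d, ⟨hxr.le, hdt.trans ht.2⟩, by simp only [← hxv, add_sub_cancel]⟩

theorem joinedIn_compl_closedBall_sdiff_segment_radial (hv : ‖v‖ = 1) (hr : 0 ≤ r)
    (hrb : r ≤ b) {x : E} (hx : x ∈ (closedBall c r)ᶜ \ segment ℝ (c + r • v) (c + b • v))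
    {R : ℝ} (hR : b < R) :
    JoinedIn ((closedBall c r)ᶜ \ segment ℝ (c + r • v) (c + b • v)) x
      (c + (R / dist x c) • (x - c)) := by
  have hd : dist x c ≠ 0 := (hr.trans_lt (not_le.1 hx.1)).ne'
  set f : ℝ → E := fun ρ ↦ c + (ρ / dist x c) • (x - c)
  have hfd : f (dist x c) = x := by simp [f, hd]
  have hpath : IsPathConnected (f '' uIcc (dist x c) R) :=
    ((convex_uIcc _ R).isPathConnected nonempty_uIcc).image (by fun_prop)
  refine (hpath.joinedIn _ ⟨_, left_mem_uIcc, hfd⟩ _ ⟨R, right_mem_uIcc, rfl⟩).mono ?_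
  exact image_subset_iff.2 fun ρ hρ ↦
    add_div_dist_smul_sub_mem_compl_closedBall_sdiff_segment hv hr hrb hx hR hρ

theorem isPathConnected_compl_closedBall_sdiff_segment (hE : 1 < Module.rank ℝ E)
    (hv : ‖v‖ = 1) (hr : 0 ≤ r) (hrb : r ≤ b) :
    IsPathConnected ((closedBall c r)ᶜ \ segment ℝ (c + r • v) (c + b • v)) := by
  have hR : b < b + 1 := lt_add_one b
  have hsphere := isPathConnected_sphere hE c (hr.trans hrb |>.trans hR.le)
  have hsub := sphere_subset_compl_closedBall_sdiff_segment (c := c) hv hr hrb hR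
  obtain ⟨p, hp⟩ := hsphere.nonempty
  refine ⟨p, hsub hp, fun x hx ↦ ?_⟩
  have hxc : x ≠ c := fun h ↦ hx.1 (h ▸ mem_closedBall_self hr)
  have hxR : c + ((b + 1) / dist x c) • (x - c) ∈ sphere c (b + 1) :=
    dist_add_div_dist_smul_sub_left hxc (by linarith)
  exact ((joinedIn_compl_closedBall_sdiff_segment_radial hv hr hrb hx hR).trans
    ((hsphere.joinedIn _ hxR _ hp).mono hsub)).symm

end RadialSlit

/-- The complement in ℝ² of the lollipop L (segment from (0,0) to (0,1) union the
circle of radius 1 centered at (0,2)) has exactly two connected components: the open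
disk of radius 1 centered at (0,2), and the rest (which is distinct from the disk). -/
theorem stmt_5
    (L : Set (EuclideanSpace ℝ (Fin 2)))
    (hL : L = segment ℝ (!₂[0, 0] : EuclideanSpace ℝ (Fin 2)) !₂[0, 1] ∪
        {x : EuclideanSpace ℝ (Fin 2) | dist x !₂[0, 2] = 1})
    (D : Set (EuclideanSpace ℝ (Fin 2)))
    (hD : D = {x : EuclideanSpace ℝ (Fin 2) | dist x !₂[0, 2] < 1}) :
    (∀ x ∈ Lᶜ, connectedComponentIn Lᶜ x = D ∨ connectedComponentIn Lᶜ x = Lᶜ \ D) ∧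
      (∃ x ∈ Lᶜ, connectedComponentIn Lᶜ x = D) ∧
      (∃ x ∈ Lᶜ, connectedComponentIn Lᶜ x = Lᶜ \ D) ∧
      D ≠ Lᶜ \ D := by
  set c : EuclideanSpace ℝ (Fin 2) := !₂[0, 2]
  set v : EuclideanSpace ℝ (Fin 2) := !₂[0, -1]
  have hv : ‖v‖ = 1 := by simp [v, EuclideanSpace.norm_eq]
  have hK : segment ℝ (!₂[0, 0] : EuclideanSpace ℝ (Fin 2)) !₂[0, 1] =
      segment ℝ (c + (1 : ℝ) • v) (c + (2 : ℝ) • v) := by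
    rw [segment_symm]; congr 1 <;> ext i <;> fin_cases i <;> norm_num [c, v]
  have hKc : IsClosed (segment ℝ (c + (1 : ℝ) • v) (c + (2 : ℝ) • v)) := by
    rw [← convexHull_pair]; exact (toFinite _).isClosed_convexHull ℝ
  set K := segment ℝ (c + (1 : ℝ) • v) (c + (2 : ℝ) • v)
  have hKb : Disjoint K (ball c 1) := disjoint_segment_add_smul_ball hv zero_le_one one_le_two
  set U := (closedBall c 1)ᶜ \ K
  have hU : IsPathConnected U :=
    isPathConnected_compl_closedBall_sdiff_segment
      (Module.one_lt_rank_of_one_lt_finrank (by simp)) hv zero_le_one one_le_two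
  have hball : ∀ x ∈ ball c 1, connectedComponentIn (ball c 1 ∪ U) x = ball c 1 := fun _ ↦
    connectedComponentIn_ball_union_compl_closedBall_sdiff_of_mem_left hKc
  have hext : ∀ x ∈ U, connectedComponentIn (ball c 1 ∪ U) x = U := fun _ ↦
    connectedComponentIn_ball_union_compl_closedBall_sdiff_of_mem_right hKc hU.isConnected.2
  obtain rfl : L = K ∪ sphere c 1 := by rw [hL, hK]; rfl
  obtain rfl : D = ball c 1 := hD
  rw [compl_union_sphere_sdiff_ball, compl_union_sphere_eq hKb]
  have hcD : c ∈ ball c 1 := mem_ball_self one_pos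
  obtain ⟨q, hq⟩ := hU.nonempty
  exact ⟨fun x hx ↦ hx.imp (hball x) (hext x), ⟨c, .inl hcD, hball c hcD⟩, ⟨q, .inr hq, hext q hq⟩,
    fun h ↦ (h ▸ hcD).1 (ball_subset_closedBall hcD)⟩
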